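/- arXiv:1512.03696 — 4 statements merged into one kernel-verified Lean document; each statement's English description precedes it below -/
import Mathlib

section
/- For all real numbers t ≥ 2 and k ≥ 0, ⌊√(t+k)⌋ − ⌊√(t−1)⌋ ≤ ⌈(k+1)/(2·√(t−1))⌉. -/
/- For all real numbers `t ≥ 2` and `k ≥ 0`,
`⌊√(t+k)⌋ - ⌊√(t-1)⌋ ≤ ⌈(k+1)/(2√(t-1))⌉`. -/
theorem count_breaths_bound (t k : ℝ) (ht : 2 ≤ t) (hk : 0 ≤ k) :
    ⌊Real.sqrt (t + k)⌋ - ⌊Real.sqrt (t - 1)⌋ ≤ ⌈(k + 1) / (2 * Real.sqrt (t - 1))⌉ := by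
  set a := Real.sqrt (t - 1) with ha
  have hapos : 0 < a := Real.sqrt_pos.2 (by linarith)
  have key : Real.sqrt (t + k) ≤ a + (k+1)/(2*a) := by
    rw [show t + k = (t-1) + (k+1) by ring]
    have hsq : a^2 = t - 1 := Real.sq_sqrt (by linarith)
    have hle : (t-1) + (k+1) ≤ (a + (k+1)/(2*a))^2 := by
      have hexp : (a + (k+1)/(2*a))^2 = a^2 + (k+1) + ((k+1)/(2*a))^2 := by
        field_simp; ring
      nlinarith [sq_nonneg ((k+1)/(2*a))]
    calc Real.sqrt ((t-1)+(k+1)) ≤ Real.sqrt ((a + (k+1)/(2*a))^2) := Real.sqrt_le_sqrt hle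
      _ = a + (k+1)/(2*a) := Real.sqrt_sq (by positivity)
  have h2 : (⌊Real.sqrt (t+k)⌋ : ℝ) ≤ Real.sqrt (t+k) := Int.floor_le _
  have h3 : a - 1 < ⌊a⌋ := Int.sub_one_lt_floor a
  rw [Int.le_ceil_iff]
  push_cast
  linarith
end

section
/- In ℤ^d with the sup metric, fix two distinct points x, x' and define the 'ideal border' B = { y ∈ ℤ^d : |d_∞(x,y) − d_∞(x',y)| ≤ 1 }. Then B is contained in a finite union of sets of the form { y : |y_i − x_i − ε(y_j − x'_j)| ≤ 1 } with 1 ≤ i,j ≤ d and ε ∈ {−1,+1}, together with sets { y : |2y_j − x_j − x'_j| ≤ 1 } for indices j with x_j = x'_j; each of these sets is a union of at most two hyperplanes with normal vector in {−1,0,1}^d ∖ {0}. -/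
/-- The sup-metric (ℓ^∞ distance) on `ℤ^d`, valued in `ℕ`. -/
def dinf {d : ℕ} (x y : Fin d → ℤ) : ℕ :=
  Finset.univ.sup fun i => (x i - y i).natAbs

/- The 'ideal border' `{ y : |d_∞(x,y) − d_∞(x',y)| ≤ 1 }` between two distinct points
`x, x'` of `ℤ^d` is contained in the union of the sets
`{ y : |y_i − x_i − ε(y_j − x'_j)| ≤ 1 }` (for `1 ≤ i,j ≤ d`, `ε = ±1`) together with the
sets `{ y : |2y_j − x_j − x'_j| ≤ 1 }` for indices `j` with `x_j = x'_j`; moreover each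
set of the latter form is a union of at most two hyperplanes with normal vector in
`{−1,0,1}^d \ {0}`. -/
theorem ideal_border_in_hyperplanes {d : ℕ} (hd : 1 ≤ d) (x x' : Fin d → ℤ) (hxx : x ≠ x') :
    (∀ y : Fin d → ℤ, |(dinf x y : ℤ) - (dinf x' y : ℤ)| ≤ 1 →
      (∃ (i j : Fin d) (ε : ℤ), (ε = 1 ∨ ε = -1) ∧ |y i - x i - ε * (y j - x' j)| ≤ 1) ∨
      (∃ j : Fin d, x j = x' j ∧ |2 * y j - x j - x' j| ≤ 1)) ∧
    (∀ j : Fin d, x j = x' j →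
      ∃ (v : Fin d → ℤ) (c₁ c₂ : ℤ), v ≠ 0 ∧ (∀ i, v i = -1 ∨ v i = 0 ∨ v i = 1) ∧
        {y : Fin d → ℤ | |2 * y j - x j - x' j| ≤ 1} ⊆
          {y | ∑ i, v i * y i = c₁} ∪ {y | ∑ i, v i * y i = c₂}) := by
  haveI : Nonempty (Fin d) := Fin.pos_iff_nonempty.mp hd
  constructor
  · intro y hy
    left
    obtain ⟨i, -, hi⟩ := Finset.exists_mem_eq_sup Finset.univ Finset.univ_nonempty
      (fun i => (x i - y i).natAbs)
    obtain ⟨j, -, hj⟩ := Finset.exists_mem_eq_sup Finset.univ Finset.univ_nonempty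
      (fun i => (x' i - y i).natAbs)
    rw [dinf, hi, dinf, hj] at hy
    rw [Int.natCast_natAbs, Int.natCast_natAbs] at hy
    set A := y i - x i with hA
    set B := y j - x' j with hB
    have h1 : |x i - y i| = |A| := by rw [hA, abs_sub_comm]
    have h2 : |x' j - y j| = |B| := by rw [hB, abs_sub_comm]
    rw [h1, h2] at hy
    rw [abs_le] at hy
    rcases abs_cases A with ⟨eA, -⟩ | ⟨eA, -⟩ <;>
      rcases abs_cases B with ⟨eB, -⟩ | ⟨eB, -⟩
    all_goals first
      | (refine ⟨i, j, 1, Or.inl rfl, ?_⟩; rw [abs_le]; constructor <;> omega)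
      | (refine ⟨i, j, -1, Or.inr rfl, ?_⟩; rw [abs_le]; constructor <;> omega)
  · intro j hj
    refine ⟨Pi.single j 1, x j, x j, ?_, ?_, ?_⟩
    · intro h
      have := congrFun h j
      simp at this
    · intro i
      by_cases h : i = j
      · subst h; simp
      · simp [Pi.single_apply, h]
    · intro y hy
      simp only [Set.mem_setOf_eq] at hy
      have hyj : y j = x j := by
        rw [hj, abs_le] at hy
        omega
      left
      simp only [Set.mem_setOf_eq]
      rw [Finset.sum_eq_single j]
      · simp [hyj]
      · intro b _ hb; simp [Pi.single_apply, hb]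
      · intro h; exact absurd (Finset.mem_univ j) h
end

section
/- Let d ≥ 1, x ∈ ℤ^d, n ≥ 1, and let T ⊆ ℤ^d be a 'star-shaped territory' around x in the sense that whenever y ∈ T and d_∞(x,y') + d_∞(y',y) = d_∞(x,y) then y' ∈ T, and assume T contains the closed d_∞-ball of radius n around x. For m > n, let S_m = { z ∈ T : d_∞(x,z) = m } (the sphere of the signal at step m inside the territory). Then |S_m| / |{ z ∈ T : d_∞(x,z) < m }| ≤ 2d(2m+1)^{d−1} / m^d · (constant depending only on d); in particular the ratio is O(1/n) uniformly over m > n. -/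
open Finset

theorem natAbs_sub_le_dinf {d : ℕ} (x y : Fin d → ℤ) (i : Fin d) :
    (x i - y i).natAbs ≤ dinf x y :=
  le_sup (f := fun i => (x i - y i).natAbs) (mem_univ i)

theorem dinf_le_iff {d : ℕ} {x y : Fin d → ℤ} {r : ℕ} :
    dinf x y ≤ r ↔ ∀ i, (x i - y i).natAbs ≤ r := by
  simp [dinf]

theorem dinf_triangle {d : ℕ} (x y z : Fin d → ℤ) : dinf x z ≤ dinf x y + dinf y z :=
  dinf_le_iff.2 fun i => by
    have := natAbs_sub_le_dinf x y i
    have := natAbs_sub_le_dinf y z i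
    omega

theorem exists_natAbs_sub_eq_dinf {d : ℕ} {x y : Fin d → ℤ} (h : 0 < dinf x y) :
    ∃ i, (x i - y i).natAbs = dinf x y := by
  by_contra! hne
  have : dinf x y ≤ dinf x y - 1 :=
    dinf_le_iff.2 fun i => by have := natAbs_sub_le_dinf x y i; have := hne i; omega
  omega

theorem Int.filter_Icc_near_eq_or_card_le {lo hi : ℤ} {t : ℕ} {A : Finset ℤ}
    (hA : A ⊆ Icc (lo - t) (hi + t)) :
    {u ∈ Icc lo hi | ∃ a ∈ A, (u - a).natAbs ≤ t} = Icc lo hi ∨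
      #A ≤ #{u ∈ Icc lo hi | ∃ a ∈ A, (u - a).natAbs ≤ t} := by
  set N := {u ∈ Icc lo hi | ∃ a ∈ A, (u - a).natAbs ≤ t}
  set G := Icc lo hi \ N
  rcases G.eq_empty_or_nonempty with hG | hG
  · exact .inl <| (filter_subset _ _).antisymm (sdiff_eq_empty_iff_subset.1 hG)
  right
  have far : ∀ g ∈ G, ∀ a ∈ A, t < (g - a).natAbs := fun g hg a ha => by
    by_contra! h
    exact (mem_sdiff.1 hg).2 (mem_filter.2 ⟨(mem_sdiff.1 hg).1, a, ha, h⟩)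
  have hGI : ∀ g ∈ G, g ∈ Icc lo hi := fun g hg => (mem_sdiff.1 hg).1
  obtain ⟨p, hpG, hp⟩ := G.exists_min_image id hG
  obtain ⟨q, hqG, hq⟩ := G.exists_max_image id hG
  -- the `t`-neighbourhood of the gap `G` misses `A` and has at least `#G + 2t` points
  set X := Ico (p - t) p ∪ G ∪ Ioc q (q + t)
  have hX : #X = t + #G + t := by
    rw [card_union_of_disjoint, card_union_of_disjoint, Int.card_Ico, Int.card_Ioc]
    · omega
    · exact disjoint_left.2 fun u hu huG => by
        have := hp u huG; simp only [mem_Ico, id] at hu this; omega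
    · refine disjoint_left.2 fun u hu huI => ?_
      simp only [mem_Ioc] at huI
      rcases mem_union.1 hu with hu | hu
      · have := hp q hqG; simp only [mem_Ico, id] at hu this; omega
      · have := hq u hu; simp only [id] at this; omega
  have hAX : Disjoint A X := disjoint_left.2 fun a ha haX => by
    rcases mem_union.1 haX with haX | haX
    · rcases mem_union.1 haX with haX | haX
      · have := far p hpG a ha; simp only [mem_Ico] at haX; omega
      · have := far a haX a ha; omega
    · have := far q hqG a ha; simp only [mem_Ioc] at haX; omega
  have hsub : A ∪ X ⊆ Icc (lo - t) (hi + t) := union_subset hA fun u hu => by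
    have hp' := mem_Icc.1 (hGI p hpG)
    have hq' := mem_Icc.1 (hGI q hqG)
    rw [mem_Icc]
    rcases mem_union.1 hu with hu | hu
    · rcases mem_union.1 hu with hu | hu
      · simp only [mem_Ico] at hu; omega
      · have := mem_Icc.1 (hGI u hu); omega
    · simp only [mem_Ioc] at hu; omega
  have h1 := card_le_card hsub
  have h2 : #G + #N = #(Icc lo hi) := card_sdiff_add_card_eq_card (filter_subset _ _)
  rw [card_union_of_disjoint hAX, hX, Int.card_Icc] at h1
  rw [Int.card_Icc] at h2
  omega

theorem Int.card_Icc_mul_card_le {lo hi : ℤ} {t : ℕ} {A J : Finset ℤ} (hAJ : A ⊆ J)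
    (hJ : J ⊆ Icc (lo - t) (hi + t)) (hlen : #(Icc lo hi) ≤ #J) :
    #(Icc lo hi) * #A ≤ #J * #{u ∈ Icc lo hi | ∃ a ∈ A, (u - a).natAbs ≤ t} := by
  rcases Int.filter_Icc_near_eq_or_card_le (hAJ.trans hJ) with h | h
  · rw [h, mul_comm]
    exact Nat.mul_le_mul_right _ (card_le_card hAJ)
  · exact Nat.mul_le_mul hlen h

theorem Finset.mul_card_le_mul_card_of_fiberwise {α β : Type*} [DecidableEq β] {s t : Finset α}
    (f : α → β) {a b : ℕ} (h : ∀ p, a * #{x ∈ s | f x = p} ≤ b * #{x ∈ t | f x = p}) :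
    a * #s ≤ b * #t := by
  have hs : Set.MapsTo f s ↑(s.image f ∪ t.image f) := fun x hx =>
    mem_union_left _ (mem_image_of_mem f hx)
  have ht : Set.MapsTo f t ↑(s.image f ∪ t.image f) := fun x hx =>
    mem_union_right _ (mem_image_of_mem f hx)
  rw [card_eq_sum_card_fiberwise hs, card_eq_sum_card_fiberwise ht, mul_sum, mul_sum]
  exact sum_le_sum fun p _ => h p

namespace IntBox

variable {ι : Type*} [Fintype ι]

def nbhdWithin (B A : Finset (ι → ℤ)) (t : ℕ) : Finset (ι → ℤ) :=
  {w ∈ B | ∃ a ∈ A, ∀ j, (w j - a j).natAbs ≤ t}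

theorem mem_nbhdWithin {B A : Finset (ι → ℤ)} {t : ℕ} {w : ι → ℤ} :
    w ∈ nbhdWithin B A t ↔ w ∈ B ∧ ∃ a ∈ A, ∀ j, (w j - a j).natAbs ≤ t :=
  mem_filter

variable [DecidableEq ι]

/-- The points within `ℓ∞`-distance `t` of `A` along the coordinates in `s`, clipped to the
box `Icc lo hi` in those coordinates, and agreeing with their point of `A` elsewhere. -/
noncomputable def thicken (lo hi : ι → ℤ) (t : ℕ) (s : Finset ι) (A : Finset (ι → ℤ)) :
    Finset (ι → ℤ) :=
  A.biUnion fun a => Fintype.piFinset fun j =>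
    if j ∈ s then {u ∈ Icc (lo j) (hi j) | (u - a j).natAbs ≤ t} else {a j}

variable {lo hi lo' hi' : ι → ℤ} {t : ℕ} {s : Finset ι} {A : Finset (ι → ℤ)}

theorem mem_thicken {w : ι → ℤ} :
    w ∈ thicken lo hi t s A ↔ ∃ a ∈ A, ∀ j,
      if j ∈ s then w j ∈ Icc (lo j) (hi j) ∧ (w j - a j).natAbs ≤ t else w j = a j := by
  simp only [thicken, mem_biUnion, Fintype.mem_piFinset]
  refine exists_congr fun a => and_congr_right fun _ => forall_congr' fun j => ?_
  split_ifs <;> simp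

theorem thicken_empty : thicken lo hi t ∅ A = A := by
  ext w
  simp only [mem_thicken, notMem_empty, if_false]
  exact ⟨fun ⟨a, ha, h⟩ => funext h ▸ ha, fun hw => ⟨w, hw, fun _ => rfl⟩⟩

theorem card_Icc_mul_card_thicken_le_insert {j : ι} (hj : j ∉ s) {J : Finset ℤ}
    (hAJ : ∀ a ∈ A, a j ∈ J) (hJ : J ⊆ Icc (lo j - t) (hi j + t))
    (hlen : #(Icc (lo j) (hi j)) ≤ #J) :
    #(Icc (lo j) (hi j)) * #(thicken lo hi t s A) ≤ #J * #(thicken lo hi t (insert j s) A) := by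
  -- compare the two sets line by line along the `j`-th coordinate
  refine mul_card_le_mul_card_of_fiberwise (fun w => Function.update w j 0) fun p => ?_
  set L := {w ∈ thicken lo hi t s A | Function.update w j 0 = p}
  set L' := {w ∈ thicken lo hi t (insert j s) A | Function.update w j 0 = p}
  have hL : #(L.image (· j)) = #L := card_image_of_injOn fun w hw w' hw' hww' => by
    have h := (mem_filter.1 hw).2.trans (mem_filter.1 hw').2.symm
    funext k
    by_cases hk : k = j
    · exact hk ▸ hww'
    · simpa [hk] using congrFun h k
  have hLJ : L.image (· j) ⊆ J := by
    rintro _ hv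
    obtain ⟨w, hwL, rfl⟩ := mem_image.1 hv
    obtain ⟨a, ha, hw⟩ := mem_thicken.1 (mem_filter.1 hwL).1
    have hwj := hw j
    rw [if_neg hj] at hwj
    exact hwj ▸ hAJ a ha
  have hLL' : {u ∈ Icc (lo j) (hi j) | ∃ v ∈ L.image (· j), (u - v).natAbs ≤ t} ⊆
      L'.image (· j) := by
    intro u hu
    obtain ⟨hu, _, hv, huw⟩ := mem_filter.1 hu
    obtain ⟨w, hwL, rfl⟩ := mem_image.1 hv
    obtain ⟨hwA, hwp⟩ := mem_filter.1 hwL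
    obtain ⟨a, ha, hw⟩ := mem_thicken.1 hwA
    refine mem_image.2 ⟨Function.update w j u, mem_filter.2 ⟨mem_thicken.2 ⟨a, ha, fun k => ?_⟩,
      by simpa using hwp⟩, by simp⟩
    by_cases hk : k = j
    · subst hk
      have := hw k
      simp only [hj, if_false] at this
      simpa [← this] using ⟨mem_Icc.1 hu, huw⟩
    · simpa [hk] using hw k
  calc #(Icc (lo j) (hi j)) * #L = #(Icc (lo j) (hi j)) * #(L.image (· j)) := by rw [hL]
    _ ≤ #J * #{u ∈ Icc (lo j) (hi j) | ∃ v ∈ L.image (· j), (u - v).natAbs ≤ t} :=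
      Int.card_Icc_mul_card_le hLJ hJ hlen
    _ ≤ #J * #L' := Nat.mul_le_mul_left _ ((card_le_card hLL').trans card_image_le)

theorem prod_card_Icc_mul_card_le_thicken (hA : A ⊆ Icc lo' hi')
    (hlo : ∀ j, lo j ≤ lo' j + t) (hhi : ∀ j, hi' j ≤ hi j + t)
    (hlen : ∀ j, hi j - lo j ≤ hi' j - lo' j) (s : Finset ι) :
    (∏ j ∈ s, #(Icc (lo j) (hi j))) * #A ≤
      (∏ j ∈ s, #(Icc (lo' j) (hi' j))) * #(thicken lo hi t s A) := by
  induction s using Finset.induction_on with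
  | empty => simp [thicken_empty]
  | insert j s hj ih =>
    have hstep := card_Icc_mul_card_thicken_le_insert (lo := lo) (hi := hi) (t := t) (A := A) hj
      (J := Icc (lo' j) (hi' j))
      (fun a ha => mem_Icc.2 ⟨(mem_Icc.1 (hA ha)).1 j, (mem_Icc.1 (hA ha)).2 j⟩)
      (Icc_subset_Icc (by linarith [hlo j]) (by linarith [hhi j]))
      (by simp only [Int.card_Icc]; have := hlen j; omega)
    rw [prod_insert hj, prod_insert hj]
    calc #(Icc (lo j) (hi j)) * (∏ k ∈ s, #(Icc (lo k) (hi k))) * #A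
        ≤ #(Icc (lo j) (hi j)) * ((∏ k ∈ s, #(Icc (lo' k) (hi' k))) * #(thicken lo hi t s A)) := by
          rw [mul_assoc]; exact Nat.mul_le_mul_left _ ih
      _ = (∏ k ∈ s, #(Icc (lo' k) (hi' k))) * (#(Icc (lo j) (hi j)) * #(thicken lo hi t s A)) := by
          ring
      _ ≤ _ := by rw [mul_comm #(Icc (lo' j) _), mul_assoc]; exact Nat.mul_le_mul_left _ hstep

theorem card_Icc_mul_card_le (hA : A ⊆ Icc lo' hi')
    (hlo : ∀ j, lo j ≤ lo' j + t) (hhi : ∀ j, hi' j ≤ hi j + t)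
    (hlen : ∀ j, hi j - lo j ≤ hi' j - lo' j) :
    #(Icc lo hi) * #A ≤ #(Icc lo' hi') * #(nbhdWithin (Icc lo hi) A t) := by
  have hsub : thicken lo hi t univ A ⊆ nbhdWithin (Icc lo hi) A t := fun w hw => by
    obtain ⟨a, ha, hwa⟩ := mem_thicken.1 hw
    simp only [mem_univ, if_true] at hwa
    refine mem_nbhdWithin.2 ⟨mem_Icc.2 ⟨fun j => ?_, fun j => ?_⟩, a, ha, fun j => (hwa j).2⟩
    exacts [(mem_Icc.1 (hwa j).1).1, (mem_Icc.1 (hwa j).1).2]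
  rw [Pi.card_Icc, Pi.card_Icc]
  exact (prod_card_Icc_mul_card_le_thicken hA hlo hhi hlen univ).trans
    (Nat.mul_le_mul_left _ (card_le_card hsub))

end IntBox

theorem pow_succ_le_two_mul_sum_range (D m : ℕ) :
    (2 * m + 1) ^ (D + 1) ≤ 2 * (D + 1) * ∑ k ∈ range (m + 1), (2 * k + 1) ^ D := by
  induction m with
  | zero => simp only [mul_zero, zero_add, one_pow, sum_range_one, mul_one]; omega
  | succ m ih =>
    have h := abs_pow_sub_pow_le (2 * m + 3 : ℤ) (2 * m + 1) (D + 1)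
    rw [show (2 * m + 3 : ℤ) - (2 * m + 1) = 2 by ring, Nat.add_sub_cancel,
      abs_of_nonneg (by positivity : (0 : ℤ) ≤ 2 * m + 3),
      abs_of_nonneg (by positivity : (0 : ℤ) ≤ 2 * m + 1), max_eq_left (by linarith), abs_two] at h
    have hstep : (2 * m + 3) ^ (D + 1) ≤ (2 * m + 1) ^ (D + 1) + 2 * (D + 1) * (2 * m + 3) ^ D := by
      have := (abs_le.1 h).2
      zify
      push_cast at this ⊢
      linarith
    rw [sum_range_succ, show 2 * (m + 1) + 1 = 2 * m + 3 by ring, mul_add]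
    omega

theorem mul_pow_le_two_mul_sum_range (D m : ℕ) :
    m * (2 * m - 1) ^ D ≤ 2 * (D + 1) * ∑ k ∈ range m, (2 * k + 1) ^ D := by
  rcases m with _ | m
  · simp
  · calc (m + 1) * (2 * (m + 1) - 1) ^ D ≤ (2 * m + 1) ^ (D + 1) := by
          rw [show 2 * (m + 1) - 1 = 2 * m + 1 by omega, pow_succ, mul_comm]
          exact Nat.mul_le_mul_left _ (by omega)
      _ ≤ _ := pow_succ_le_two_mul_sum_range D m

namespace StarTerritory

variable {d : ℕ}

def IsDinfStarShaped (x : Fin d → ℤ) (T : Finset (Fin d → ℤ)) : Prop :=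
  ∀ y ∈ T, ∀ y' : Fin d → ℤ, dinf x y' + dinf y' y = dinf x y → y' ∈ T

def faceLo (x : Fin d → ℤ) (i : Fin d) (b : Bool) (r : ℕ) (j : Fin d) : ℤ :=
  if j = i then (if b then x j + r else x j - r) else if j < i then x j - r + 1 else x j - r

def faceHi (x : Fin d → ℤ) (i : Fin d) (b : Bool) (r : ℕ) (j : Fin d) : ℤ :=
  if j = i then (if b then x j + r else x j - r) else if j < i then x j + r - 1 else x j + r

/-- The points `z` of the `d_∞`-sphere of radius `r` around `x` whose first coordinate `j` with
`|z j - x j| = r` is `i`, and with `z i - x i = r` if `b` and `= -r` otherwise (for `r ≥ 1`). -/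
noncomputable def halfFace (x : Fin d → ℤ) (i : Fin d) (b : Bool) (r : ℕ) : Finset (Fin d → ℤ) :=
  Icc (faceLo x i b r) (faceHi x i b r)

variable {x y : Fin d → ℤ} {i : Fin d} {b : Bool} {k m r : ℕ}

theorem mem_halfFace_iff : y ∈ halfFace x i b r ↔
    ∀ j, faceLo x i b r j ≤ y j ∧ y j ≤ faceHi x i b r j := by
  simp [halfFace, Pi.le_def, forall_and]

theorem dinf_eq_of_mem_halfFace (hy : y ∈ halfFace x i b r) : dinf x y = r := by
  rw [mem_halfFace_iff] at hy
  refine le_antisymm (dinf_le_iff.2 fun j => ?_) ?_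
  · have := hy j
    simp only [faceLo, faceHi] at this
    split_ifs at this <;> omega
  · have := natAbs_sub_le_dinf x y i
    have := hy i
    simp only [faceLo, faceHi, if_true] at this
    split_ifs at this <;> omega

theorem disjoint_halfFace (hr : 1 ≤ r) {i' : Fin d} {b' : Bool} (h : (i, b) ≠ (i', b')) :
    Disjoint (halfFace x i b r) (halfFace x i' b' r) := by
  refine disjoint_left.2 fun y hy hy' => ?_
  rw [mem_halfFace_iff] at hy hy'
  rcases lt_trichotomy i i' with hii' | rfl | hii'
  · have h1 := hy i; have h2 := hy' i
    simp only [faceLo, faceHi, if_true, hii'.ne, hii', if_false] at h1 h2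
    split_ifs at h1 <;> omega
  · have h1 := hy i; have h2 := hy' i
    have hb : b ≠ b' := fun hb => h (hb ▸ rfl)
    simp only [faceLo, faceHi, if_true] at h1 h2
    cases b <;> cases b' <;>
      simp only [ne_eq, not_true_eq_false, Bool.false_eq_true, Bool.true_eq_false, ↓reduceIte]
        at hb h1 h2 <;> omega
  · have h1 := hy i'; have h2 := hy' i'
    simp only [faceLo, faceHi, if_true, hii'.ne, hii', if_false] at h1 h2
    split_ifs at h2 <;> omega

theorem exists_mem_halfFace (hr : 1 ≤ r) (hy : dinf x y = r) :
    ∃ i b, y ∈ halfFace x i b r := by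
  set F : Finset (Fin d) := {j | (x j - y j).natAbs = r}
  obtain ⟨j₀, hj₀⟩ := exists_natAbs_sub_eq_dinf (x := x) (y := y) (by omega)
  obtain ⟨i, hiF, hmin⟩ := F.exists_min_image id ⟨j₀, mem_filter.2 ⟨mem_univ _, hj₀.trans hy⟩⟩
  refine ⟨i, decide (x i < y i), mem_halfFace_iff.2 fun j => ?_⟩
  have hjr := natAbs_sub_le_dinf x y j
  have hiF := (mem_filter.1 hiF).2
  simp only [faceLo, faceHi]
  split_ifs with hji hb hji'
  · subst hji; simp only [decide_eq_true_eq] at hb; omega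
  · subst hji; simp only [decide_eq_true_eq] at hb; omega
  · have : j ∉ F := fun hjF => absurd (hmin j hjF) (not_le.2 hji')
    simp only [F, mem_filter, mem_univ, true_and] at this
    omega
  · omega

theorem card_Icc_face_self (r : ℕ) : #(Icc (faceLo x i b r i) (faceHi x i b r i)) = 1 := by
  simp [faceLo, faceHi]

theorem card_halfFace_pos (hr : 1 ≤ r) : 0 < #(halfFace x i b r) := by
  rw [halfFace, Pi.card_Icc]
  refine prod_pos fun j _ => ?_
  simp only [faceLo, faceHi, Int.card_Icc]
  split_ifs <;> omega

theorem pow_mul_card_halfFace_le (hkm : k ≤ m) :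
    (2 * k - 1) ^ (d - 1) * #(halfFace x i b m) ≤ (2 * m - 1) ^ (d - 1) * #(halfFace x i b k) := by
  have hpow : ∀ c : ℕ, c ^ (d - 1) = ∏ _j ∈ univ.erase i, c := by
    simp [prod_const, card_erase_of_mem]
  rw [halfFace, halfFace, Pi.card_Icc, Pi.card_Icc, ← mul_prod_erase univ _ (mem_univ i),
    ← mul_prod_erase univ _ (mem_univ i), card_Icc_face_self, card_Icc_face_self, one_mul,
    one_mul, hpow, hpow, ← prod_mul_distrib, ← prod_mul_distrib]
  refine prod_le_prod (fun _ _ => Nat.zero_le _) fun j hj => ?_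
  simp only [faceLo, faceHi, ne_of_mem_erase hj, if_false, Int.card_Icc]
  split_ifs
  · rw [show (x j + m - 1 + 1 - (x j - m + 1)).toNat = 2 * m - 1 by omega,
      show (x j + k - 1 + 1 - (x j - k + 1)).toNat = 2 * k - 1 by omega, mul_comm]
  · rw [show (x j + m + 1 - (x j - m)).toNat = 2 * m + 1 by omega,
      show (x j + k + 1 - (x j - k)).toNat = 2 * k + 1 by omega]
    rcases Nat.eq_zero_or_pos k with rfl | hk
    · simp
    · obtain ⟨k, rfl⟩ := Nat.exists_eq_add_of_le' hk
      obtain ⟨m, rfl⟩ := Nat.exists_eq_add_of_le' (hk.trans_le hkm)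
      rw [show 2 * (k + 1) - 1 = 2 * k + 1 by omega, show 2 * (m + 1) - 1 = 2 * m + 1 by omega]
      nlinarith

variable {T : Finset (Fin d → ℤ)}

theorem card_halfFace_mul_card_inter_le (hT : IsDinfStarShaped x T) (hkm : k ≤ m) :
    #(halfFace x i b k) * #(T ∩ halfFace x i b m) ≤
      #(halfFace x i b m) * #(T ∩ halfFace x i b k) := by
  refine (IntBox.card_Icc_mul_card_le (t := m - k) inter_subset_right (fun j => ?_) (fun j => ?_)
    (fun j => ?_)).trans (Nat.mul_le_mul_left _ (card_le_card fun w hw => ?_))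
  · simp only [faceLo]; split_ifs <;> omega
  · simp only [faceHi]; split_ifs <;> omega
  · simp only [faceLo, faceHi]; split_ifs <;> omega
  · -- `w` lies on a `d_∞`-geodesic from `x` to a point `a` of `T`
    obtain ⟨hwF, a, ha, hwa⟩ := IntBox.mem_nbhdWithin.1 hw
    obtain ⟨haT, haF⟩ := mem_inter.1 ha
    have hxw : dinf x w = k := dinf_eq_of_mem_halfFace hwF
    have hxa : dinf x a = m := dinf_eq_of_mem_halfFace haF
    have hwa : dinf w a ≤ m - k := dinf_le_iff.2 hwa
    have := dinf_triangle x w a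
    exact mem_inter.2 ⟨hT a haT w (by omega), hwF⟩

theorem pow_mul_card_sphere_le (hT : IsDinfStarShaped x T) (hk : 1 ≤ k) (hkm : k ≤ m) :
    (2 * k - 1) ^ (d - 1) * #{z ∈ T | dinf x z = m} ≤
      (2 * m - 1) ^ (d - 1) * #{z ∈ T | dinf x z = k} := by
  have hcover : #{z ∈ T | dinf x z = m} ≤ ∑ c : Fin d × Bool, #(T ∩ halfFace x c.1 c.2 m) := by
    refine (card_le_card fun z hz => ?_).trans card_biUnion_le
    obtain ⟨hzT, hzm⟩ := mem_filter.1 hz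
    obtain ⟨i, b, hzF⟩ := exists_mem_halfFace (hk.trans hkm) hzm
    exact mem_biUnion.2 ⟨(i, b), mem_univ _, mem_inter.2 ⟨hzT, hzF⟩⟩
  have hpack : ∑ c : Fin d × Bool, #(T ∩ halfFace x c.1 c.2 k) ≤ #{z ∈ T | dinf x z = k} := by
    rw [← card_biUnion fun c _ c' _ hcc' =>
      (disjoint_halfFace hk hcc').mono inter_subset_right inter_subset_right]
    refine card_le_card (biUnion_subset.2 fun c _ z hz => ?_)
    obtain ⟨hzT, hzF⟩ := mem_inter.1 hz
    exact mem_filter.2 ⟨hzT, dinf_eq_of_mem_halfFace hzF⟩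
  have hface : ∀ c : Fin d × Bool, (2 * k - 1) ^ (d - 1) * #(T ∩ halfFace x c.1 c.2 m) ≤
      (2 * m - 1) ^ (d - 1) * #(T ∩ halfFace x c.1 c.2 k) := by
    rintro ⟨i, b⟩
    have h1 := card_halfFace_mul_card_inter_le (i := i) (b := b) hT hkm
    have h2 := pow_mul_card_halfFace_le (x := x) (i := i) (b := b) hkm
    refine Nat.le_of_mul_le_mul_left ?_ (card_halfFace_pos (x := x) (i := i) (b := b) hk)
    nlinarith [Nat.mul_le_mul_left ((2 * k - 1) ^ (d - 1)) h1,
      Nat.mul_le_mul_right #(T ∩ halfFace x i b k) h2]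
  calc (2 * k - 1) ^ (d - 1) * #{z ∈ T | dinf x z = m}
      ≤ ∑ c : Fin d × Bool, (2 * k - 1) ^ (d - 1) * #(T ∩ halfFace x c.1 c.2 m) := by
        rw [← mul_sum]; exact Nat.mul_le_mul_left _ hcover
    _ ≤ ∑ c : Fin d × Bool, (2 * m - 1) ^ (d - 1) * #(T ∩ halfFace x c.1 c.2 k) :=
        sum_le_sum fun c _ => hface c
    _ ≤ (2 * m - 1) ^ (d - 1) * #{z ∈ T | dinf x z = k} := by
        rw [← mul_sum]; exact Nat.mul_le_mul_left _ hpack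

theorem sum_pow_mul_card_sphere_le (hT : IsDinfStarShaped x T) (m : ℕ) :
    (∑ k ∈ range m, (2 * k + 1) ^ (d - 1)) * #{z ∈ T | dinf x z = m} ≤
      (2 * m - 1) ^ (d - 1) * #{z ∈ T | dinf x z ≤ m} := by
  have hlayers : ∑ k ∈ range m, #{z ∈ T | dinf x z = k + 1} ≤ #{z ∈ T | dinf x z ≤ m} := by
    rw [← card_biUnion fun k _ k' _ hkk' =>
      disjoint_filter.2 fun z _ hz hz' => hkk' (by omega)]
    refine card_le_card (biUnion_subset.2 fun k hk z hz => ?_)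
    obtain ⟨hzT, hzk⟩ := mem_filter.1 hz
    exact mem_filter.2 ⟨hzT, by have := mem_range.1 hk; omega⟩
  rw [sum_mul]
  calc ∑ k ∈ range m, (2 * k + 1) ^ (d - 1) * #{z ∈ T | dinf x z = m}
      ≤ ∑ k ∈ range m, (2 * m - 1) ^ (d - 1) * #{z ∈ T | dinf x z = k + 1} :=
        sum_le_sum fun k hk => by
          have := pow_mul_card_sphere_le hT (k := k + 1) (by omega) (mem_range.1 hk)
          rwa [show 2 * (k + 1) - 1 = 2 * k + 1 by omega] at this
    _ ≤ (2 * m - 1) ^ (d - 1) * #{z ∈ T | dinf x z ≤ m} := by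
        rw [← mul_sum]; exact Nat.mul_le_mul_left _ hlayers

theorem mul_card_sphere_le_two_mul_card_ball (hT : IsDinfStarShaped x T) (hd : 1 ≤ d) (m : ℕ) :
    m * #{z ∈ T | dinf x z = m} ≤ 2 * d * #{z ∈ T | dinf x z ≤ m} := by
  rcases Nat.eq_zero_or_pos m with rfl | hm
  · simp
  obtain ⟨D, rfl⟩ := Nat.exists_eq_add_of_le' hd
  have hsum := mul_pow_le_two_mul_sum_range D m
  have hcone := sum_pow_mul_card_sphere_le hT m
  rw [Nat.add_sub_cancel] at hcone
  refine Nat.le_of_mul_le_mul_left ?_ (pow_pos (by omega : 0 < 2 * m - 1) D)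
  nlinarith [Nat.mul_le_mul_right #{z ∈ T | dinf x z = m} hsum,
    Nat.mul_le_mul_left (2 * (D + 1)) hcone]

end StarTerritory

open StarTerritory

theorem star_territory_cone_volume_general {d : ℕ} (hd : 1 ≤ d) (m : ℕ)
    (x : Fin d → ℤ) (T : Finset (Fin d → ℤ))
    (hstar : ∀ y ∈ T, ∀ y' : Fin d → ℤ, dinf x y' + dinf y' y = dinf x y → y' ∈ T) :
    ((m : ℝ) / (2 * m + 1)) * ((T.filter fun z => dinf x z = m).card : ℝ) * ((m : ℝ) / d)
      ≤ ((T.filter fun z => dinf x z ≤ m).card : ℝ) := by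
  have key : (m : ℝ) * #{z ∈ T | dinf x z = m} ≤ 2 * d * #{z ∈ T | dinf x z ≤ m} := by
    exact_mod_cast mul_card_sphere_le_two_mul_card_ball hstar hd m
  have hd' : (0 : ℝ) < d := Nat.cast_pos.2 hd
  rw [div_mul_eq_mul_div, div_mul_div_comm, div_le_iff₀ (by positivity)]
  nlinarith [mul_le_mul_of_nonneg_right key (Nat.cast_nonneg m : (0 : ℝ) ≤ m),
    mul_nonneg (Nat.cast_nonneg #{z ∈ T | dinf x z ≤ m} : (0 : ℝ) ≤ _) hd'.le]

theorem star_territory_cone_volume {d : ℕ} (hd : 1 ≤ d) (n m : ℕ) (hn : 1 ≤ n) (hm : n < m)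
    (x : Fin d → ℤ) (T : Finset (Fin d → ℤ))
    (hstar : ∀ y ∈ T, ∀ y' : Fin d → ℤ, dinf x y' + dinf y' y = dinf x y → y' ∈ T)
    (hball : ∀ z : Fin d → ℤ, dinf x z ≤ n → z ∈ T) :
    ((m : ℝ) / (2 * m + 1)) * ((T.filter fun z => dinf x z = m).card : ℝ) * ((m : ℝ) / d)
      ≤ ((T.filter fun z => dinf x z ≤ m).card : ℝ) :=
  star_territory_cone_volume_general hd m x T hstar
end

section
/- In the redundant binary counter alphabet {−1,0,1,2} under a decrementation regime where the least significant digit alternates and no two −1 digits are ever adjacent, the only possible representations of the value 1 whose most significant digit is adjacent to the blank are the words '1' and '1(−1)' (i.e., #1 and #1(−1) reading from most significant to least), up to eliminable leading zeros. -/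
/-- Value of a redundant binary counter given as a list of digits, least significant
digit first: `rval (c₀ :: c₁ :: …) = c₀ + 2·c₁ + 4·c₂ + …`. -/
def rval (c : List ℤ) : ℤ :=
  c.foldr (fun dgt acc => dgt + 2 * acc) 0

/- In a counter over digits `{−1,0,1}` with nonzero leading (most significant) digit and
no two adjacent `−1` digits, the only representations of the value `1` are the words
`1` and `1(−1)` (MSB-first), i.e. the LSB-first lists `[1]` and `[-1, 1]`. -/
theorem counter_value_one_representations (c : List ℤ) (hne : c ≠ [])
    (hdig : ∀ x ∈ c, x = -1 ∨ x = 0 ∨ x = 1)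
    (hlead : c.getLast hne ≠ 0)
    (hadj : c.Chain' fun a b => ¬(a = -1 ∧ b = -1))
    (hval : rval c = 1) :
    c = [1] ∨ c = [-1, 1] := by
  have zero : ∀ (t : List ℤ), (∀ x ∈ t, x = -1 ∨ x = 0 ∨ x = 1) →
      rval t = 0 → ∀ h : t ≠ [], t.getLast h = 0 := by
    intro t
    induction t with
    | nil => intro _ _ h; exact absurd rfl h
    | cons d s ih =>
      intro hdig hv h
      have hd := hdig d (by simp)
      have hv' : d + 2 * rval s = 0 := hv
      have hd0 : d = 0 := by omega
      have hs : rval s = 0 := by omega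
      rcases eq_or_ne s [] with rfl | hs'
      · simpa using hd0
      · rw [List.getLast_cons hs']
        exact ih (fun x hx => hdig x (by simp [hx])) hs hs'
  obtain ⟨d, t, rfl⟩ : ∃ d t, c = d :: t := by
    cases c with
    | nil => exact absurd rfl hne
    | cons a b => exact ⟨a, b, rfl⟩
  have hd := hdig d (by simp)
  have hv : d + 2 * rval t = 1 := hval
  rcases eq_or_ne t [] with rfl | ht
  · left
    have h0 : rval ([] : List ℤ) = 0 := rfl
    rw [h0] at hv
    have : d = 1 := by omega
    rw [this]
  · -- t nonempty; last of t ≠ 0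
    have hlast : t.getLast ht ≠ 0 := by
      rwa [List.getLast_cons ht] at hlead
    have hd1 : d = 1 ∨ d = -1 := by omega
    rcases hd1 with rfl | rfl
    · -- rval t = 0, contradiction
      have : rval t = 0 := by omega
      exact absurd (zero t (fun x hx => hdig x (by simp [hx])) this ht) hlast
    · -- d = -1, rval t = 1
      have hvt : rval t = 1 := by omega
      obtain ⟨e, s, rfl⟩ : ∃ e s, t = e :: s := by
        cases t with
        | nil => exact absurd rfl ht
        | cons a b => exact ⟨a, b, rfl⟩
      have he : e ≠ -1 := by
        have := (List.isChain_cons_cons.mp hadj).1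
        intro h; exact this ⟨rfl, h⟩
      have he' := hdig e (by simp)
      have hv2 : e + 2 * rval s = 1 := hvt
      have he1 : e = 1 := by omega
      subst he1
      have hs0 : rval s = 0 := by omega
      rcases eq_or_ne s [] with rfl | hs'
      · right; rfl
      · have hls : s.getLast hs' ≠ 0 := by
          rw [List.getLast_cons ht, List.getLast_cons hs'] at hlead
          exact hlead
        exact absurd (zero s (fun x hx => hdig x (by simp [hx])) hs0 hs') hls
end
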